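/- arXiv:1604.02678 — 4 statements merged into one kernel-verified Lean document; each statement's English description precedes it below -/
import Mathlib

section
/- Let (X, d) be a metric space. Then every admissible cover of X has a Lebesgue number, i.e., there exists δ > 0 such that every subset of X of diameter less than δ is contained in some member of the cover. -/
/-!
If some member `U i₀` has compact complement `K`, the Lebesgue number lemma for the compact
set `K` handles small sets meeting `K`, and a set missing `K` lies in `U i₀`. Otherwise every
member has compact closure, so the finite cover makes `X` itself compact.
-/

open Set

theorem exists_pos_forall_ediam_lt_subset_of_inter_nonempty {X : Type*} [PseudoMetricSpace X]
    {ι : Sort*} {K : Set X} {U : ι → Set X} (hK : IsCompact K) (hopen : ∀ i, IsOpen (U i))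
    (hcover : K ⊆ ⋃ i, U i) :
    ∃ δ : ℝ, 0 < δ ∧ ∀ S : Set X, (S ∩ K).Nonempty →
      Metric.ediam S < ENNReal.ofReal δ → ∃ i, S ⊆ U i := by
  obtain ⟨δ, hδ, hball⟩ := lebesgue_number_lemma_of_metric hK hopen hcover
  refine ⟨δ, hδ, fun S ⟨x, hxS, hxK⟩ hdiam => ?_⟩
  obtain ⟨i, hi⟩ := hball x hxK
  refine ⟨i, fun y hy => hi ?_⟩
  rw [Metric.mem_ball, dist_comm, ← edist_lt_ofReal]
  exact (Metric.edist_le_ediam_of_mem hxS hy).trans_lt hdiam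

theorem isCompact_univ_of_isCompact_closure_of_iUnion_eq_univ {X : Type*} [TopologicalSpace X]
    {ι : Type*} [Finite ι] {U : ι → Set X} (hU : ∀ i, IsCompact (closure (U i)))
    (hcover : (⋃ i, U i) = univ) :
    IsCompact (univ : Set X) :=
  (isCompact_iUnion hU).of_isClosed_subset isClosed_univ
    (hcover ▸ iUnion_mono fun _ => subset_closure)

/-- Every admissible cover of a metric space has a Lebesgue number: if
`U : ι → Set X` (with `ι` finite) is an open cover all of whose members are
admissible (the closure or the complement of each member is compact), then there
is `δ > 0` such that every nonempty subset of `X` of diameter less than `δ` is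
contained in some member of the cover. -/
theorem admissible_cover_has_lebesgue_number {X : Type*} [MetricSpace X]
    {ι : Type*} [Finite ι] (U : ι → Set X)
    (hopen : ∀ i, IsOpen (U i))
    (hadm : ∀ i, IsCompact (closure (U i)) ∨ IsCompact (U i)ᶜ)
    (hcover : (⋃ i, U i) = Set.univ) :
    ∃ δ : ℝ, 0 < δ ∧ ∀ S : Set X, S.Nonempty →
      EMetric.diam S < ENNReal.ofReal δ → ∃ i, S ⊆ U i := by
  by_cases h : ∃ i₀, IsCompact (U i₀)ᶜ
  · obtain ⟨i₀, hK⟩ := h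
    obtain ⟨δ, hδ, hsmall⟩ := exists_pos_forall_ediam_lt_subset_of_inter_nonempty hK hopen
      (hcover ▸ subset_univ _)
    refine ⟨δ, hδ, fun S _ hdiam => ?_⟩
    rcases (S ∩ (U i₀)ᶜ).eq_empty_or_nonempty with hmiss | hmeet
    · exact ⟨i₀, fun x hx => by_contra fun hxU => hmiss.subset ⟨hx, hxU⟩⟩
    · exact hsmall S hmeet hdiam
  · simp only [not_exists] at h
    have hX := isCompact_univ_of_isCompact_closure_of_iUnion_eq_univ
      (fun i => (hadm i).resolve_right (h i)) hcover
    obtain ⟨δ, hδ, hsmall⟩ :=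
      exists_pos_forall_ediam_lt_subset_of_inter_nonempty hX hopen hcover.ge
    exact ⟨δ, hδ, fun S hS => hsmall S (by rwa [inter_univ])⟩
end

section
/- Let X be a locally compact separable metric space and let d be the restriction to X of a metric d̃ on the one-point compactification X̃ inducing its topology. Then for every ε > 0 there exists a finite cover of X by admissible open sets each having diameter less than ε. -/
/-!
Transport everything to the compact space `X̃`, in which `X` sits isometrically as the complement
of `∞`. The points of `X` at `d̃`-distance less than `ε / 3` from `∞` form one admissible set, with
compact complement. What is left is compact, so finitely many `d`-balls of radius `ε / 6`
cover it; their centres are at distance at least `ε / 3` from `∞`, so their closed balls stay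
away from `∞` and are compact.
-/

open Metric Set Topology

def IsAdmissible {X : Type*} [TopologicalSpace X] (U : Set X) : Prop :=
  IsOpen U ∧ (IsCompact (closure U) ∨ IsCompact Uᶜ)

lemma Metric.ediam_ball_lt_ofReal {α : Type*} [PseudoMetricSpace α] (x : α) {r ε : ℝ}
    (hε : 0 < ε) (hr : 2 * r < ε) : ediam (ball x r) < ENNReal.ofReal ε := by
  refine (ediam_le_of_forall_dist_le fun y hy z hz => ?_).trans_lt
    ((ENNReal.ofReal_lt_ofReal_iff hε).2 hr)
  linarith [dist_triangle_right y z x, mem_ball.1 hy, mem_ball.1 hz]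

lemma Isometry.ediam_preimage_le {X Y : Type*} [PseudoEMetricSpace X] [PseudoEMetricSpace Y]
    {e : X → Y} (he : Isometry e) (s : Set Y) : ediam (e ⁻¹' s) ≤ ediam s :=
  he.ediam_image (e ⁻¹' s) ▸ ediam_mono (image_preimage_subset e s)

section

variable {X Y : Type*} [MetricSpace X] [MetricSpace Y] [CompactSpace Y] {e : X → Y} {p : Y}

lemma isCompact_preimage_compl_ball (he : IsInducing e) (hrange : range e = {p}ᶜ)
    {ρ : ℝ} (hρ : 0 < ρ) : IsCompact (e ⁻¹' (ball p ρ)ᶜ) :=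
  he.isCompact_preimage' isOpen_ball.isClosed_compl.isCompact <| by
    rw [hrange, compl_subset_compl, singleton_subset_iff]
    exact mem_ball_self hρ

lemma isCompact_closure_ball_of_lt_dist (he : Isometry e) (hrange : range e = {p}ᶜ)
    {x : X} {δ : ℝ} (hδ : δ < dist (e x) p) : IsCompact (closure (ball x δ)) := by
  have hK := isCompact_preimage_compl_ball he.isEmbedding.isInducing hrange (sub_pos.2 hδ)
  refine hK.of_isClosed_subset isClosed_closure
    (closure_ball_subset_closedBall.trans fun y hy => ?_)
  have hxy : dist (e x) (e y) ≤ δ := (he.dist_eq x y).trans_le (mem_closedBall'.1 hy)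
  simp only [mem_preimage, mem_compl_iff, mem_ball, not_lt]
  linarith [dist_triangle (e x) (e y) p]

theorem exists_finite_admissible_cover (he : Isometry e) (hrange : range e = {p}ᶜ)
    {ε : ℝ} (hε : 0 < ε) :
    ∃ 𝒰 : Set (Set X), 𝒰.Finite ∧ ⋃₀ 𝒰 = univ ∧
      ∀ U ∈ 𝒰, IsAdmissible U ∧ ediam U < ENNReal.ofReal ε := by
  have hK := isCompact_preimage_compl_ball he.isEmbedding.isInducing hrange
    (by positivity : 0 < ε / 3)
  obtain ⟨t, htK, htfin, hKt⟩ := finite_cover_balls_of_compact hK (by positivity : 0 < ε / 6)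
  refine ⟨insert (e ⁻¹' ball p (ε / 3)) ((ball · (ε / 6)) '' t), (htfin.image _).insert _,
    eq_univ_of_forall fun x => ?_, ?_⟩
  · by_cases hx : x ∈ e ⁻¹' ball p (ε / 3)
    · exact ⟨_, mem_insert _ _, hx⟩
    · obtain ⟨c, hc, hxc⟩ := mem_iUnion₂.1 (hKt hx)
      exact ⟨_, mem_insert_of_mem _ (mem_image_of_mem _ hc), hxc⟩
  · rintro U (rfl | ⟨x, hx, rfl⟩)
    · exact ⟨⟨isOpen_ball.preimage he.continuous, .inr hK⟩,
        (he.ediam_preimage_le _).trans_lt (ediam_ball_lt_ofReal p hε (by linarith))⟩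
    · have hx : ε / 3 ≤ dist (e x) p := not_lt.1 (htK hx)
      exact ⟨⟨isOpen_ball, .inl (isCompact_closure_ball_of_lt_dist he hrange (by linarith))⟩,
        ediam_ball_lt_ofReal x hε (by linarith)⟩

end

theorem exists_admissible_cover_of_small_diam_general {X : Type*} [MetricSpace X]
    (m : MetricSpace (OnePoint X))
    (hcompat : m.toUniformSpace.toTopologicalSpace =
      (inferInstance : TopologicalSpace (OnePoint X)))
    (hrestrict : ∀ x y : X,
      @dist _ m.toPseudoMetricSpace.toDist (x : OnePoint X) (y : OnePoint X) = dist x y) :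
    ∀ ε : ℝ, 0 < ε → ∃ (n : ℕ) (U : Fin n → Set X),
      (∀ i, IsOpen (U i)) ∧
      (∀ i, IsCompact (closure (U i)) ∨ IsCompact (U i)ᶜ) ∧
      (⋃ i, U i) = Set.univ ∧
      (∀ i, EMetric.diam (U i) < ENNReal.ofReal ε) := by
  intro ε hε
  let : MetricSpace (OnePoint X) := m.replaceTopology hcompat.symm
  obtain ⟨𝒰, h𝒰, hcover, hadm⟩ := exists_finite_admissible_cover (Isometry.of_dist_eq hrestrict)
    (eq_compl_comm.1 OnePoint.compl_range_coe.symm) hε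
  obtain ⟨n, U, -, rfl⟩ := h𝒰.fin_param
  have hU i := hadm (U i) (mem_range_self i)
  exact ⟨n, U, fun i => (hU i).1.1, fun i => (hU i).1.2, by rwa [← sUnion_range],
    fun i => (hU i).2⟩

/-- Let `X` be a locally compact separable metric space whose metric `d` is the
restriction of a metric `d̃` on the one-point compactification `X̃` inducing the
topology of `X̃`. Then for every `ε > 0` there is a finite cover of `X` by
admissible open sets (sets whose closure or complement is compact), each of
diameter less than `ε`. -/
theorem exists_admissible_cover_of_small_diam {X : Type*} [MetricSpace X]
    [LocallyCompactSpace X] [TopologicalSpace.SeparableSpace X]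
    (m : MetricSpace (OnePoint X))
    (hcompat : m.toUniformSpace.toTopologicalSpace =
      (inferInstance : TopologicalSpace (OnePoint X)))
    (hrestrict : ∀ x y : X,
      @dist _ m.toPseudoMetricSpace.toDist (x : OnePoint X) (y : OnePoint X) = dist x y) :
    ∀ ε : ℝ, 0 < ε → ∃ (n : ℕ) (U : Fin n → Set X),
      (∀ i, IsOpen (U i)) ∧
      (∀ i, IsCompact (closure (U i)) ∨ IsCompact (U i)ᶜ) ∧
      (⋃ i, U i) = Set.univ ∧
      (∀ i, EMetric.diam (U i) < ENNReal.ofReal ε) :=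
  exists_admissible_cover_of_small_diam_general m hcompat hrestrict
end

section
/- Let f : X → X be a homeomorphism of a locally compact separable metric space X whose metric is the restriction of a metric on the one-point compactification X̃. Then f has a generator if and only if f has a weak generator. -/
/-! A weak generator `α` yields a generator: shrink `α` to an admissible cover `β` with
`cl β i ⊆ α i` (normality plus local compactness, which lets the shrunk sets be enlarged back to
admissible ones). Every intersection `⋂ f⁻ⁿ(cl β (A n))` then lies in `⋂ f⁻ⁿ(α (A n))`. -/

section

variable {X : Type*} [MetricSpace X]

/-- `α : Fin k → Set X` is an admissible cover: a finite open cover of `X` whose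
members are admissible open sets (closure or complement compact). -/
def IsAdmissibleCover {k : ℕ} (α : Fin k → Set X) : Prop :=
  (∀ i, IsOpen (α i)) ∧ (∀ i, IsCompact (closure (α i)) ∨ IsCompact (α i)ᶜ) ∧
    (⋃ i, α i) = Set.univ

/-- `f` (a homeomorphism given by the bijection `e`) has a generator: a finite
admissible cover `α` such that `⋂ n : ℤ, f⁻ⁿ(cl (α (A n)))` contains at most one
point for every bisequence `A` from `α`. -/
def HasGenerator (e : X ≃ X) : Prop :=
  ∃ (k : ℕ) (α : Fin k → Set X), IsAdmissibleCover α ∧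
    ∀ A : ℤ → Fin k, (⋂ n : ℤ, (⇑(e ^ n)) ⁻¹' closure (α (A n))).Subsingleton

/-- `f` has a weak generator: a finite admissible cover `α` such that
`⋂ n : ℤ, f⁻ⁿ(α (A n))` contains at most one point for every bisequence `A`. -/
def HasWeakGenerator (e : X ≃ X) : Prop :=
  ∃ (k : ℕ) (α : Fin k → Set X), IsAdmissibleCover α ∧
    ∀ A : ℤ → Fin k, (⋂ n : ℤ, (⇑(e ^ n)) ⁻¹' (α (A n))).Subsingleton

end

open Set

section

variable {X : Type*} [TopologicalSpace X] [WeaklyLocallyCompactSpace X] [R1Space X]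

theorem exists_isOpen_closure_subset_isCompact_compl {U : Set X} (hU : IsCompact Uᶜ) :
    ∃ V, IsOpen V ∧ closure V ⊆ U ∧ IsCompact Vᶜ := by
  obtain ⟨W, hWo, hUW, hWc⟩ := exists_isOpen_superset_and_isCompact_closure hU
  refine ⟨(closure W)ᶜ, isClosed_closure.isOpen_compl, ?_, by rwa [compl_compl]⟩
  calc closure (closure W)ᶜ ⊆ Wᶜ :=
        closure_minimal (compl_subset_compl.2 subset_closure) hWo.isClosed_compl
    _ ⊆ U := compl_subset_comm.1 hUW

theorem exists_admissible_superset_closure_subset {U W : Set X}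
    (hU : IsCompact (closure U) ∨ IsCompact Uᶜ) (hW : IsOpen W) (hWU : closure W ⊆ U) :
    ∃ W', IsOpen W' ∧ W ⊆ W' ∧ closure W' ⊆ U ∧ (IsCompact (closure W') ∨ IsCompact W'ᶜ) := by
  rcases hU with hU | hU
  · exact ⟨W, hW, subset_rfl, hWU,
      .inl (hU.of_isClosed_subset isClosed_closure (hWU.trans subset_closure))⟩
  · obtain ⟨V, hVo, hVU, hVc⟩ := exists_isOpen_closure_subset_isCompact_compl hU
    refine ⟨W ∪ V, hW.union hVo, subset_union_left, ?_, .inr ?_⟩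
    · rw [closure_union]
      exact union_subset hWU hVU
    · exact hVc.of_isClosed_subset (hW.union hVo).isClosed_compl
        (compl_subset_compl.2 subset_union_right)

end

section

variable {X : Type*} [MetricSpace X]

theorem IsAdmissibleCover.exists_closure_subset [LocallyCompactSpace X] {k : ℕ}
    {α : Fin k → Set X} (hα : IsAdmissibleCover α) :
    ∃ β : Fin k → Set X, IsAdmissibleCover β ∧ ∀ i, closure (β i) ⊆ α i := by
  obtain ⟨hopen, hadm, hcov⟩ := hα
  -- metric spaces are normal, so the shrinking lemma applies
  obtain ⟨β₀, hβ₀cov, hβ₀open, hβ₀α⟩ :=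
    exists_iUnion_eq_closure_subset hopen (fun _ => toFinite _) hcov
  choose β hβopen hβ₀β hβα hβadm using fun i =>
    exists_admissible_superset_closure_subset (hadm i) (hβ₀open i) (hβ₀α i)
  exact ⟨β, ⟨hβopen, hβadm, eq_univ_of_univ_subset (hβ₀cov ▸ iUnion_mono hβ₀β)⟩, hβα⟩

theorem HasGenerator.hasWeakGenerator {e : X ≃ X} (he : HasGenerator e) : HasWeakGenerator e := by
  obtain ⟨k, α, hα, hgen⟩ := he
  exact ⟨k, α, hα, fun A => (hgen A).anti (iInter_mono fun n => preimage_mono subset_closure)⟩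

theorem HasWeakGenerator.hasGenerator [LocallyCompactSpace X] {e : X ≃ X}
    (he : HasWeakGenerator e) : HasGenerator e := by
  obtain ⟨k, α, hα, hweak⟩ := he
  obtain ⟨β, hβ, hβα⟩ := hα.exists_closure_subset
  exact ⟨k, β, hβ, fun A => (hweak A).anti (iInter_mono fun n => preimage_mono (hβα (A n)))⟩

theorem hasGenerator_iff_hasWeakGenerator_general
    [LocallyCompactSpace X]
    (e : X ≃ X) :
    HasGenerator e ↔ HasWeakGenerator e :=
  ⟨HasGenerator.hasWeakGenerator, HasWeakGenerator.hasGenerator⟩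

/-- Let `f : X → X` be a homeomorphism of a locally compact separable metric
space `X` whose metric is the restriction of a metric on the one-point
compactification `X̃`. Then `f` has a generator iff `f` has a weak generator. -/
theorem hasGenerator_iff_hasWeakGenerator
    [LocallyCompactSpace X] [TopologicalSpace.SeparableSpace X]
    (m : MetricSpace (OnePoint X))
    (hcompat : m.toUniformSpace.toTopologicalSpace =
      (inferInstance : TopologicalSpace (OnePoint X)))
    (hrestrict : ∀ x y : X,
      @dist _ m.toPseudoMetricSpace.toDist (x : OnePoint X) (y : OnePoint X) = dist x y)
    (e : X ≃ X) (hc : Continuous e) (hc' : Continuous e.symm) :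
    HasGenerator e ↔ HasWeakGenerator e :=
  hasGenerator_iff_hasWeakGenerator_general e

end
end

section
/- Let f : X → X be an expansive homeomorphism of a locally compact separable metric space (X, d), where d is the restriction of a metric d̃ on the one-point compactification X̃. Then the extension f̃ : X̃ → X̃ (with f̃(∞) = ∞) is an expansive homeomorphism of (X̃, d̃). -/
/-
The orbits staying within `δ / 2` of `∞` forever are pairwise `δ`-close at all times, so by
expansiveness of `f` there is at most one such point `x₀ ≠ ∞`. Shrinking the constant below
`d̃(x₀, ∞)` therefore makes every orbit in `X` leave a fixed ball around `∞`, which separates it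
from the fixed point `∞`.
-/

/-- The extension of a bijection `e : X ≃ X` to the one-point compactification,
fixing the point at infinity. -/
def onePointCongr {X : Type*} (e : X ≃ X) : OnePoint X ≃ OnePoint X :=
  Equiv.optionCongr e

open OnePoint

namespace Equiv.Perm

variable {Y : Type*} {g : Perm Y} {p : Y} {δ : ℝ}

def IsExpansiveOn [Dist Y] (g : Perm Y) (δ : ℝ) (s : Set Y) : Prop :=
  ∀ x ∈ s, ∀ y ∈ s, x ≠ y → ∃ n : ℤ, δ < dist ((g ^ n) x) ((g ^ n) y)

theorem IsExpansiveOn.eq_of_forall_zpow_dist_le_half [PseudoMetricSpace Y] {s : Set Y}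
    (hg : g.IsExpansiveOn δ s) {x y : Y} (hx : x ∈ s) (hy : y ∈ s)
    (hxp : ∀ n : ℤ, dist ((g ^ n) x) p ≤ δ / 2) (hyp : ∀ n : ℤ, dist ((g ^ n) y) p ≤ δ / 2) :
    x = y := by
  by_contra hxy
  obtain ⟨n, hn⟩ := hg x hx y hy hxy
  linarith [dist_triangle_right ((g ^ n) x) ((g ^ n) y) p, hxp n, hyp n]

theorem IsExpansiveOn.exists_forall_ne_exists_zpow_dist_gt [MetricSpace Y] (hδ : 0 < δ)
    (hg : g.IsExpansiveOn δ {p}ᶜ) :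
    ∃ ε, 0 < ε ∧ ε ≤ δ / 2 ∧ ∀ x ≠ p, ∃ n : ℤ, ε < dist ((g ^ n) x) p := by
  set S := {x | x ≠ p ∧ ∀ n : ℤ, dist ((g ^ n) x) p ≤ δ / 2}
  have hS : S.Subsingleton := fun x hx y hy =>
    hg.eq_of_forall_zpow_dist_le_half hx.1 hy.1 hx.2 hy.2
  have escape : ∀ x ≠ p, x ∉ S → ∃ n : ℤ, δ / 2 < dist ((g ^ n) x) p := by
    intro x hxp hxS
    simpa [S, hxp] using hxS
  rcases hS.eq_empty_or_singleton with hS0 | ⟨x₀, hS0⟩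
  · exact ⟨δ / 2, by positivity, le_rfl, fun x hxp => escape x hxp (by simp [hS0])⟩
  · have hx₀S : x₀ ∈ S := by simp [hS0]
    have hx₀p : 0 < dist x₀ p := dist_pos.mpr hx₀S.1
    refine ⟨min (δ / 2) (dist x₀ p / 2), by positivity, min_le_left _ _, fun x hxp => ?_⟩
    by_cases hxx₀ : x = x₀
    · subst hxx₀
      exact ⟨0, by simpa using (min_le_right _ _).trans_lt (half_lt_self hx₀p)⟩
    · obtain ⟨n, hn⟩ := escape x hxp (by simp [hS0, hxx₀])
      exact ⟨n, (min_le_left _ _).trans_lt hn⟩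

theorem IsExpansiveOn.exists_isExpansiveOn_univ_of_apply_eq_self [MetricSpace Y] (hp : g p = p)
    (hδ : 0 < δ) (hg : g.IsExpansiveOn δ {p}ᶜ) : ∃ ε, 0 < ε ∧ g.IsExpansiveOn ε .univ := by
  obtain ⟨ε, hε, hεδ, hescape⟩ := hg.exists_forall_ne_exists_zpow_dist_gt hδ
  have hpn (n : ℤ) : (g ^ n) p = p := zpow_apply_eq_self_of_apply_eq_self hp n
  refine ⟨ε, hε, fun x _ y _ hxy => ?_⟩
  by_cases hxp : x = p
  · subst hxp
    obtain ⟨n, hn⟩ := hescape y (Ne.symm hxy)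
    exact ⟨n, by rwa [hpn, dist_comm]⟩
  by_cases hyp : y = p
  · subst hyp
    obtain ⟨n, hn⟩ := hescape x hxy
    exact ⟨n, by rwa [hpn]⟩
  obtain ⟨n, hn⟩ := hg x hxp y hyp hxy
  exact ⟨n, by linarith⟩

end Equiv.Perm

def Equiv.Perm.optionCongrHom (α : Type*) : Perm α →* Perm (Option α) where
  toFun := Equiv.optionCongr
  map_one' := Equiv.optionCongr_refl
  map_mul' a b := by simp only [Perm.mul_def, ← Equiv.optionCongr_trans]

theorem onePointCongr_zpow {X : Type*} (e : X ≃ X) (n : ℤ) :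
    onePointCongr e ^ n = onePointCongr (e ^ n) :=
  (map_zpow (Equiv.Perm.optionCongrHom X) e n).symm

theorem onePointCongr_coe {X : Type*} (e : X ≃ X) (x : X) :
    onePointCongr e x = (e x : OnePoint X) := rfl

theorem onePointCongr_infty {X : Type*} (e : X ≃ X) :
    onePointCongr e ∞ = (∞ : OnePoint X) := rfl

theorem onePointExtension_expansive_general {X : Type*} [MetricSpace X]
    (m : MetricSpace (OnePoint X))
    (hrestrict : ∀ x y : X,
      @dist _ m.toPseudoMetricSpace.toDist (x : OnePoint X) (y : OnePoint X) = dist x y)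
    (e : X ≃ X) (hc : Continuous e) (hc' : Continuous e.symm)
    (hexp : ∃ δ : ℝ, 0 < δ ∧
      ∀ x y : X, x ≠ y → ∃ n : ℤ, δ < dist ((e ^ n) x) ((e ^ n) y)) :
    Continuous (onePointCongr e) ∧ Continuous (onePointCongr e).symm ∧
    ∃ δ : ℝ, 0 < δ ∧ ∀ x y : OnePoint X, x ≠ y → ∃ n : ℤ,
      δ < @dist _ m.toPseudoMetricSpace.toDist
          ((onePointCongr e ^ n) x) ((onePointCongr e ^ n) y) := by
  let h : X ≃ₜ X := ⟨e, hc, hc'⟩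
  refine ⟨h.onePointCongr.continuous, h.onePointCongr.symm.continuous, ?_⟩
  let _ := m
  obtain ⟨δ, hδ, hsep⟩ := hexp
  have hg : Equiv.Perm.IsExpansiveOn (onePointCongr e) δ {∞}ᶜ := by
    intro x hx y hy hxy
    lift x to X using hx
    lift y to X using hy
    obtain ⟨n, hn⟩ := hsep x y (by simpa using hxy)
    exact ⟨n, by rwa [onePointCongr_zpow, onePointCongr_coe, onePointCongr_coe, hrestrict]⟩
  obtain ⟨ε, hε, hg'⟩ := hg.exists_isExpansiveOn_univ_of_apply_eq_self (onePointCongr_infty e) hδ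
  exact ⟨ε, hε, fun x y => hg' x trivial y trivial⟩

/-- Let `f : X → X` be an expansive homeomorphism of a locally compact separable
metric space `(X, d)`, where `d` is the restriction of a metric `d̃` on the
one-point compactification `X̃` (a metric inducing the topology of `X̃`). Then the
extension `f̃ : X̃ → X̃` (sending `∞` to `∞`) is an expansive homeomorphism of
`(X̃, d̃)`: it and its inverse are continuous, and there is `δ > 0` separating any
two distinct points of `X̃` under some iterate `f̃^n`, `n ∈ ℤ`. -/
theorem onePointExtension_expansive {X : Type*} [MetricSpace X]
    [LocallyCompactSpace X] [TopologicalSpace.SeparableSpace X]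
    (m : MetricSpace (OnePoint X))
    (hcompat : m.toUniformSpace.toTopologicalSpace =
      (inferInstance : TopologicalSpace (OnePoint X)))
    (hrestrict : ∀ x y : X,
      @dist _ m.toPseudoMetricSpace.toDist (x : OnePoint X) (y : OnePoint X) = dist x y)
    (e : X ≃ X) (hc : Continuous e) (hc' : Continuous e.symm)
    (hexp : ∃ δ : ℝ, 0 < δ ∧
      ∀ x y : X, x ≠ y → ∃ n : ℤ, δ < dist ((e ^ n) x) ((e ^ n) y)) :
    Continuous (onePointCongr e) ∧ Continuous (onePointCongr e).symm ∧
    ∃ δ : ℝ, 0 < δ ∧ ∀ x y : OnePoint X, x ≠ y → ∃ n : ℤ,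
      δ < @dist _ m.toPseudoMetricSpace.toDist
          ((onePointCongr e ^ n) x) ((onePointCongr e ^ n) y) :=
  onePointExtension_expansive_general m hrestrict e hc hc' hexp
end
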